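/- Let G be a finite connected simple graph with n ≥ 2 vertices and a fixed linear order on its edge set, and for each i let t_i denote the number of NBC spanning trees of G having exactly i internally active edges. Then for every natural number λ, the number of proper colorings of the vertices of G with λ colors equals (−1)^{n−1} · λ · Σ_{i=1}^{n−1} t_i · (1−λ)^i (as an identity of integers). -/

import Mathlib

set_option linter.unusedSectionVars false
set_option linter.unusedVariables false
set_option maxHeartbeats 1000000


open SimpleGraph

attribute [-instance] Sym2.instPartialOrder

variable {V : Type*}

/-- `T` is a spanning tree of `G`: a subgraph of `G` (on the same vertex set) that is a tree. -/
def IsSpanningTree (G T : SimpleGraph V) : Prop :=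
  T ≤ G ∧ T.IsTree

/-- `cutset G T e`: the set of edges of `G` whose endpoints lie in the two different
components of `T` with the edge `e` deleted. -/
def cutset (G T : SimpleGraph V) (e : Sym2 V) : Set (Sym2 V) :=
  {f | f ∈ G.edgeSet ∧ ∀ u v : V, f = s(u, v) → ¬ (T.deleteEdges {e}).Reachable u v}

/-- `cycset T f`: the edge set of the unique cycle of `T` with the edge `f` added
(an edge of the unicyclic connected graph `T + f` lies on the cycle iff deleting it
keeps the graph connected). -/
def cycset (T : SimpleGraph V) (f : Sym2 V) : Set (Sym2 V) :=
  {e | e ∈ (T ⊔ fromEdgeSet {f}).edgeSet ∧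
    ((T ⊔ fromEdgeSet {f}).deleteEdges {e}).Connected}

/-- An edge `e` of `T` is internally active if it is the minimum of `cutset G T e`. -/
def InternallyActive [LinearOrder (Sym2 V)] (G T : SimpleGraph V) (e : Sym2 V) : Prop :=
  e ∈ T.edgeSet ∧ ∀ f ∈ cutset G T e, e ≤ f

/-- `IN G T`: the set of internally inactive edges of `T`. -/
def IN [LinearOrder (Sym2 V)] (G T : SimpleGraph V) : Set (Sym2 V) :=
  {e | e ∈ T.edgeSet ∧ ¬ InternallyActive G T e}

/-- `C` is the edge set of some cycle of `G`. -/
def IsCycleEdgeSet (G : SimpleGraph V) (C : Set (Sym2 V)) : Prop :=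
  ∃ (v : V) (w : G.Walk v v), w.IsCycle ∧ C = {e | e ∈ w.edges}

/-- A broken circuit: the edge set of a cycle with its minimum edge removed. -/
def IsBrokenCircuit [LinearOrder (Sym2 V)] (G : SimpleGraph V) (B : Set (Sym2 V)) : Prop :=
  ∃ (C : Set (Sym2 V)) (e : Sym2 V),
    IsCycleEdgeSet G C ∧ e ∈ C ∧ (∀ f ∈ C, e ≤ f) ∧ B = C \ {e}

/-- A set of edges is NBC if it contains no broken circuit. -/
def IsNBC [LinearOrder (Sym2 V)] (G : SimpleGraph V) (S : Set (Sym2 V)) : Prop :=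
  ∀ B : Set (Sym2 V), IsBrokenCircuit G B → ¬ B ⊆ S

/-- `T` is an NBC spanning tree of `G`. -/
def IsNBCSpanningTree [LinearOrder (Sym2 V)] (G T : SimpleGraph V) : Prop :=
  IsSpanningTree G T ∧ IsNBC G T.edgeSet

/-- The edge set of `T` written as a list in increasing order. -/
noncomputable def edgeList [Fintype V] [LinearOrder (Sym2 V)] (T : SimpleGraph V) :
    List (Sym2 V) :=
  (Set.toFinite T.edgeSet).toFinset.sort (· ≤ ·)

/-- Lexicographic order on spanning trees via their sorted edge lists. -/
def treeLexLT [Fintype V] [LinearOrder (Sym2 V)] (T T' : SimpleGraph V) : Prop :=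
  List.Lex (· < ·) (edgeList T) (edgeList T')


namespace NBC

lemma reach_transfer {K L : SimpleGraph V} (h : ∀ a b : V, K.Adj a b → L.Reachable a b)
    {u v : V} (r : K.Reachable u v) : L.Reachable u v := by
  obtain ⟨w⟩ := r
  induction w with
  | nil => exact Reachable.refl _
  | cons h' p ih => exact (h _ _ h').trans ih

lemma cross {K L : SimpleGraph V} {u v : V} (w : K.Walk u v) (h : ¬ L.Reachable u v) :
    ∃ a b : V, K.Adj a b ∧ s(a, b) ∈ w.edges ∧ ¬ L.Reachable a b := by
  induction w with
  | nil => exact absurd (Reachable.refl _) h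
  | @cons a b c h' p ih =>
    by_cases hr : L.Reachable b c
    · refine ⟨a, b, h', by simp, fun hab => h (hab.trans hr)⟩
    · obtain ⟨x, y, h1, h2, h3⟩ := ih hr
      exact ⟨x, y, h1, by simp [h2], h3⟩

lemma cycle_reach {G : SimpleGraph V} {C : Set (Sym2 V)} (hC : IsCycleEdgeSet G C)
    {e : Sym2 V} (he : e ∈ C) :
    ∀ u v : V, e = s(u, v) → ((fromEdgeSet C).deleteEdges {e}).Reachable u v := by
  obtain ⟨v0, w, hw, rfl⟩ := hC
  intro u v huv
  have hp : ∀ g ∈ w.edges, g ∈ (fromEdgeSet {e | e ∈ w.edges}).edgeSet := by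
    intro g hg
    rw [edgeSet_fromEdgeSet]
    exact ⟨hg, G.not_isDiag_of_mem_edgeSet (w.edges_subset_edgeSet hg)⟩
  have hcyc : (w.transfer _ hp).IsCycle := hw.transfer hp
  have hmem : s(u, v) ∈ (w.transfer _ hp).edges := by
    rw [Walk.edges_transfer]; exact huv ▸ he
  have := (adj_and_reachable_delete_edges_iff_exists_cycle
    (G := fromEdgeSet {e | e ∈ w.edges})).mpr ⟨v0, w.transfer _ hp, hcyc, hmem⟩
  rw [huv]
  exact this.2

lemma exists_cycle_of_reach {H : SimpleGraph V} {x y : V} (hadj : H.Adj x y)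
    (hreach : (H.deleteEdges {s(x, y)}).Reachable x y) :
    ∃ (u : V) (p : H.Walk u u), p.IsCycle ∧ s(x, y) ∈ p.edges :=
  adj_and_reachable_delete_edges_iff_exists_cycle.mp ⟨hadj, hreach⟩

lemma cycleEdgeSet_subset {G : SimpleGraph V} {C : Set (Sym2 V)} (hC : IsCycleEdgeSet G C) :
    C ⊆ G.edgeSet := by
  obtain ⟨v0, w, hw, rfl⟩ := hC
  exact fun g hg => w.edges_subset_edgeSet hg

section Cand

variable [LinearOrder (Sym2 V)]

def isCand (G : SimpleGraph V) (S : Finset (Sym2 V)) (e : Sym2 V) : Prop :=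
  ∃ C : Set (Sym2 V), IsCycleEdgeSet G C ∧ e ∈ C ∧ (∀ f ∈ C, e ≤ f) ∧ C \ {e} ⊆ ↑S

lemma isCand.mem_edgeSet {G : SimpleGraph V} {S : Finset (Sym2 V)} {e : Sym2 V}
    (h : isCand G S e) : e ∈ G.edgeSet := by
  obtain ⟨C, hC, heC, -, -⟩ := h
  exact cycleEdgeSet_subset hC heC

lemma isCand.mono {G : SimpleGraph V} {S S' : Finset (Sym2 V)} {e : Sym2 V}
    (hSS : S ⊆ S') (h : isCand G S e) : isCand G S' e := by
  obtain ⟨C, hC, heC, hmin, hsub⟩ := h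
  exact ⟨C, hC, heC, hmin, hsub.trans (by exact_mod_cast hSS)⟩

lemma not_nbc_iff {G : SimpleGraph V} {S : Finset (Sym2 V)} :
    ¬ IsNBC G (↑S : Set (Sym2 V)) ↔ ∃ e, isCand G S e := by
  constructor
  · intro h
    rw [IsNBC] at h
    push_neg at h
    obtain ⟨B, ⟨C, e, hC, heC, hmin, rfl⟩, hBS⟩ := h
    exact ⟨e, C, hC, heC, hmin, hBS⟩
  · rintro ⟨e, C, hC, heC, hmin, hsub⟩ hnbc
    exact hnbc (C \ {e}) ⟨C, e, hC, heC, hmin, rfl⟩ hsub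

/-- circuit elimination for candidates -/
lemma cand_elim {G : SimpleGraph V} {S : Finset (Sym2 V)} {e f : Sym2 V}
    (he : isCand G S e) (hf : isCand G (insert e S) f) (hfe : f < e) : isCand G S f := by
  obtain ⟨C, hC, heC, hminC, hsubC⟩ := he
  obtain ⟨D, hD, hfD, hminD, hsubD⟩ := hf
  by_cases heD : e ∈ D
  · -- hard case
    have hfG : f ∈ G.edgeSet := cycleEdgeSet_subset hD hfD
    have hfC : f ∉ C := fun h => absurd (hminC f h) (not_le.mpr hfe)
    induction f using Sym2.ind with
    | _ x y =>
    set H : SimpleGraph V := fromEdgeSet ((C ∪ D) \ {e}) with hH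
    have hxy : x ≠ y := by
      intro h; exact G.not_isDiag_of_mem_edgeSet hfG (by rw [h]; exact Sym2.mk_isDiag_iff.mpr rfl)
    have hadj : H.Adj x y := by
      rw [hH, fromEdgeSet_adj]
      exact ⟨⟨Or.inr hfD, fun h => (hfe.ne (by exact h))⟩, hxy⟩
    have hCD_sub : ((C ∪ D) \ {e} : Set (Sym2 V)) ⊆ G.edgeSet := fun g hg =>
      hg.1.elim (fun h => cycleEdgeSet_subset hC h) (fun h => cycleEdgeSet_subset hD h)
    -- reach in H minus f
    have hreach : (H.deleteEdges {s(x, y)}).Reachable x y := by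
      have r1 : ((fromEdgeSet D).deleteEdges {s(x, y)}).Reachable x y :=
        cycle_reach hD hfD x y rfl
      refine reach_transfer ?_ r1
      intro a b hab
      rw [deleteEdges_adj, fromEdgeSet_adj] at hab
      obtain ⟨⟨habD, hab_ne⟩, habf⟩ := hab
      by_cases habe : s(a, b) = e
      · -- replace e by the C-path
        have r2 : ((fromEdgeSet C).deleteEdges {e}).Reachable a b :=
          cycle_reach hC heC a b habe.symm
        refine reach_transfer ?_ r2
        intro p q hpq
        rw [deleteEdges_adj, fromEdgeSet_adj] at hpq
        obtain ⟨⟨hpqC, hpq_ne⟩, hpqe⟩ := hpq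
        apply Adj.reachable
        rw [deleteEdges_adj, hH, fromEdgeSet_adj]
        refine ⟨⟨⟨Or.inl hpqC, by simpa using hpqe⟩, hpq_ne⟩, ?_⟩
        simp only [Set.mem_singleton_iff]
        intro h
        exact absurd (hminC _ (h ▸ hpqC)) (not_le.mpr (h ▸ hfe))
      · apply Adj.reachable
        rw [deleteEdges_adj, hH, fromEdgeSet_adj]
        refine ⟨⟨⟨Or.inr habD, by simpa using habe⟩, hab_ne⟩, by simpa using habf⟩
    obtain ⟨u, p, hp, hfp⟩ := exists_cycle_of_reach hadj hreach
    have hpG : ∀ g ∈ p.edges, g ∈ G.edgeSet := by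
      intro g hg
      have := p.edges_subset_edgeSet hg
      rw [hH, edgeSet_fromEdgeSet] at this
      exact hCD_sub this.1
    refine ⟨{g | g ∈ (p.transfer G hpG).edges}, ⟨u, p.transfer G hpG, hp.transfer hpG, rfl⟩,
      ?_, ?_, ?_⟩
    · rw [Walk.edges_transfer]; exact hfp
    · intro g hg
      rw [Set.mem_setOf_eq, Walk.edges_transfer] at hg
      have := p.edges_subset_edgeSet hg
      rw [hH, edgeSet_fromEdgeSet] at this
      rcases this.1.1 with h | h
      · exact le_of_lt (lt_of_lt_of_le hfe (hminC _ h))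
      · exact hminD _ h
    · intro g hg
      obtain ⟨hg1, hg2⟩ := hg
      rw [Set.mem_setOf_eq, Walk.edges_transfer] at hg1
      have := p.edges_subset_edgeSet hg1
      rw [hH, edgeSet_fromEdgeSet] at this
      obtain ⟨⟨hgCD, hge⟩, -⟩ := this
      rcases hgCD with h | h
      · exact hsubC ⟨h, by simpa using hge⟩
      · have := hsubD ⟨h, hg2⟩
        rw [Finset.coe_insert, Set.mem_insert_iff] at this
        rcases this with h' | h'
        · exact absurd h' (by simpa using hge)
        · exact h'
  · refine ⟨D, hD, hfD, hminD, fun g hg => ?_⟩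
    have := hsubD hg
    rw [Finset.coe_insert, Set.mem_insert_iff] at this
    rcases this with h' | h'
    · exact absurd (h' ▸ hg.1) heD
    · exact h'

end Cand

def mono {lam : ℕ} (f : V → Fin lam) (S : Finset (Sym2 V)) : Prop :=
  ∀ e ∈ S, ∀ u v : V, e = s(u, v) → f u = f v

noncomputable def N (lam : ℕ) (S : Finset (Sym2 V)) : ℕ :=
  Nat.card {f : V → Fin lam // mono f S}

variable [Fintype V]

noncomputable def EG (G : SimpleGraph V) : Finset (Sym2 V) :=
  (Set.toFinite G.edgeSet).toFinset

lemma mem_EG {G : SimpleGraph V} {e : Sym2 V} : e ∈ EG G ↔ e ∈ G.edgeSet :=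
  Set.Finite.mem_toFinset _

open Classical in
noncomputable def Mf (G : SimpleGraph V) {lam : ℕ} (f : V → Fin lam) : Finset (Sym2 V) :=
  (EG G).filter (fun e => ∀ u v : V, e = s(u, v) → f u = f v)

lemma proper_iff_Mf_empty {G : SimpleGraph V} {lam : ℕ} (f : V → Fin lam) :
    (∀ a b : V, G.Adj a b → f a ≠ f b) ↔ Mf G f = ∅ := by
  classical
  constructor
  · intro h
    rw [Finset.eq_empty_iff_forall_notMem]
    intro e he
    rw [Mf, Finset.mem_filter, mem_EG] at he
    induction e using Sym2.ind with
    | _ x y =>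
      exact h x y he.1 (he.2 x y rfl)
  · intro h a b hadj hfab
    have : s(a, b) ∈ Mf G f := by
      rw [Mf, Finset.mem_filter, mem_EG]
      refine ⟨hadj, ?_⟩
      intro u v huv
      rw [Sym2.eq_iff] at huv
      rcases huv with ⟨rfl, rfl⟩ | ⟨rfl, rfl⟩
      · exact hfab
      · exact hfab.symm
    rw [h] at this
    exact absurd this (Finset.notMem_empty _)

lemma mono_iff_subset_Mf {G : SimpleGraph V} {lam : ℕ} (f : V → Fin lam)
    {S : Finset (Sym2 V)} (hS : S ⊆ EG G) : mono f S ↔ S ⊆ Mf G f := by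
  classical
  constructor
  · intro h e he
    rw [Mf, Finset.mem_filter]
    exact ⟨hS he, h e he⟩
  · intro h e he u v huv
    have := h he
    rw [Mf, Finset.mem_filter] at this
    exact this.2 u v huv

open Classical in
lemma N_eq_sum {lam : ℕ} (S : Finset (Sym2 V)) :
    (N lam S : ℤ) = ∑ f : V → Fin lam, if mono f S then 1 else 0 := by
  classical
  rw [N, Nat.card_eq_fintype_card, Fintype.card_subtype]
  rw [Finset.card_filter]
  push_cast
  rfl

open Classical in
theorem part1 (G : SimpleGraph V) (lam : ℕ) :
    (Nat.card (G.Coloring (Fin lam)) : ℤ) =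
      ∑ S ∈ (EG G).powerset, (-1) ^ S.card * (N lam S : ℤ) := by
  classical
  have key : ∀ f : V → Fin lam,
      ∑ S ∈ (EG G).powerset, ((-1 : ℤ)) ^ S.card * (if mono f S then 1 else 0) =
        (if (∀ a b : V, G.Adj a b → f a ≠ f b) then 1 else 0) := by
    intro f
    have h1 : ∀ S ∈ (EG G).powerset,
        ((-1 : ℤ)) ^ S.card * (if mono f S then 1 else 0) =
        (if S ⊆ Mf G f then ((-1 : ℤ)) ^ S.card else 0) := by
      intro S hS
      rw [Finset.mem_powerset] at hS
      rw [mono_iff_subset_Mf f hS]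
      split <;> ring
    rw [Finset.sum_congr rfl h1, Finset.sum_ite, Finset.sum_const_zero, add_zero]
    have h2 : (EG G).powerset.filter (· ⊆ Mf G f) = (Mf G f).powerset := by
      ext S
      simp only [Finset.mem_filter, Finset.mem_powerset]
      constructor
      · exact fun h => h.2
      · intro h
        exact ⟨h.trans (Finset.filter_subset _ _), h⟩
    rw [h2, Finset.sum_powerset_neg_one_pow_card]
    exact if_congr (proper_iff_Mf_empty f).symm rfl rfl
  have lhs : (Nat.card (G.Coloring (Fin lam)) : ℤ) =
      ∑ f : V → Fin lam, (if (∀ a b : V, G.Adj a b → f a ≠ f b) then 1 else 0) := by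
    have e : G.Coloring (Fin lam) ≃ {f : V → Fin lam // ∀ a b : V, G.Adj a b → f a ≠ f b} :=
      { toFun := fun c => ⟨c, fun a b h => c.valid h⟩
        invFun := fun p => Coloring.mk p.1 (fun {a b} h => p.2 a b h)
        left_inv := fun c => rfl
        right_inv := fun p => rfl }
    rw [Nat.card_congr e, Nat.card_eq_fintype_card, Fintype.card_subtype, Finset.card_filter]
    push_cast
    rfl
  rw [lhs]
  have rhs : ∑ S ∈ (EG G).powerset, (-1 : ℤ) ^ S.card * (N lam S : ℤ) =
      ∑ S ∈ (EG G).powerset, ∑ f : V → Fin lam,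
        ((-1 : ℤ)) ^ S.card * (if mono f S then 1 else 0) := by
    refine Finset.sum_congr rfl fun S _ => ?_
    rw [N_eq_sum, Finset.mul_sum]
  rw [rhs, Finset.sum_comm]
  exact (Finset.sum_congr rfl fun f _ => key f).symm


lemma isAcyclic_mono {K L : SimpleGraph V} (h : K ≤ L) (hL : L.IsAcyclic) : K.IsAcyclic := by
  intro v c hc
  have hp : ∀ g ∈ c.edges, g ∈ L.edgeSet := fun g hg =>
    edgeSet_subset_edgeSet.mpr h (c.edges_subset_edgeSet hg)
  exact hL (c.transfer L hp) (hc.transfer hp)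

variable [Fintype V] [LinearOrder (Sym2 V)]

open Classical in
lemma N_erase_acyclic {m : ℕ} {S : Finset (Sym2 V)} (hdiag : ∀ e ∈ S, ¬ e.IsDiag)
    (hac : (fromEdgeSet (↑S : Set (Sym2 V))).IsAcyclic) {e : Sym2 V} (he : e ∈ S) :
    N (m + 1) (S.erase e) = N (m + 1) S * (m + 1) := by
  induction e using Sym2.ind with
  | _ a b =>
  have hab : a ≠ b := fun h => hdiag _ he (by rw [h]; exact Sym2.mk_isDiag_iff.mpr rfl)
  have hadj : (fromEdgeSet (↑S : Set (Sym2 V))).Adj a b := (fromEdgeSet_adj _).mpr ⟨he, hab⟩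
  have hbridge := isAcyclic_iff_forall_adj_isBridge.mp hac hadj
  rw [isBridge_iff] at hbridge
  have hle : fromEdgeSet (↑(S.erase s(a, b)) : Set (Sym2 V)) ≤
      fromEdgeSet (↑S : Set (Sym2 V)) \ fromEdgeSet {s(a, b)} := by
    intro u v huv
    rw [fromEdgeSet_adj] at huv
    obtain ⟨h1, h2⟩ := huv
    rw [Finset.coe_erase, Set.mem_diff, Set.mem_singleton_iff] at h1
    constructor
    · exact (fromEdgeSet_adj _).mpr ⟨h1.1, h2⟩
    · rw [fromEdgeSet_adj]
      rintro ⟨h3, -⟩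
      exact h1.2 h3
  set L := fromEdgeSet (↑(S.erase s(a, b)) : Set (Sym2 V)) with hLdef
  have hbr : ¬ L.Reachable a b := fun h => hbridge (h.mono hle)
  have adj_iffR : ∀ {u v : V}, L.Adj u v → (L.Reachable u b ↔ L.Reachable v b) := by
    intro u v huv
    exact ⟨fun h => huv.symm.reachable.trans h, fun h => huv.reachable.trans h⟩
  have hRb : L.Reachable b b := Reachable.refl _
  set R : V → Prop := fun v => L.Reachable v b with hRdef
  have adjL : ∀ {d : Sym2 V}, d ∈ S.erase s(a, b) → ∀ {u v : V}, d = s(u, v) → L.Adj u v := by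
    intro d hd u v huv
    rw [hLdef, fromEdgeSet_adj]
    refine ⟨by rw [← huv]; exact_mod_cast hd, ?_⟩
    intro h
    exact hdiag d (Finset.mem_of_mem_erase hd)
      (by rw [huv, h]; exact Sym2.mk_isDiag_iff.mpr rfl)
  have eqv : {f : V → Fin (m+1) // mono f S} × Fin (m+1) ≃
      {g : V → Fin (m+1) // mono g (S.erase s(a,b))} :=
    { toFun := fun p => ⟨fun v => if R v then p.1.1 v + p.2 else p.1.1 v, by
        intro d hd u v huv
        dsimp only
        have hfe : p.1.1 u = p.1.1 v := p.1.2 d (Finset.mem_of_mem_erase hd) u v huv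
        have huvadj : L.Adj u v := adjL hd huv
        by_cases hR : R u
        · rw [if_pos hR, if_pos ((adj_iffR huvadj).mp hR), hfe]
        · rw [if_neg hR, if_neg (fun h => hR ((adj_iffR huvadj).mpr h)), hfe]⟩
      invFun := fun g =>
        ⟨⟨fun v => if R v then g.1 v - (g.1 b - g.1 a) else g.1 v, by
          intro d hd u v huv
          dsimp only
          by_cases hdab : d = s(a, b)
          · have : s(u, v) = s(a, b) := huv ▸ hdab
            rw [Sym2.eq_iff] at this
            have hva : (if R a then g.1 a - (g.1 b - g.1 a) else g.1 a) = g.1 a :=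
              if_neg hbr
            have hvb : (if R b then g.1 b - (g.1 b - g.1 a) else g.1 b) = g.1 a := by
              rw [if_pos hRb, sub_sub_cancel]
            rcases this with ⟨rfl, rfl⟩ | ⟨rfl, rfl⟩
            · rw [hva, hvb]
            · rw [hva, hvb]

          · have hd' : d ∈ S.erase s(a, b) := Finset.mem_erase.mpr ⟨hdab, hd⟩
            have hfe : g.1 u = g.1 v := g.2 d hd' u v huv
            have huvadj : L.Adj u v := adjL hd' huv
            by_cases hR : R u
            · rw [if_pos hR, if_pos ((adj_iffR huvadj).mp hR), hfe]
            · rw [if_neg hR, if_neg (fun h => hR ((adj_iffR huvadj).mpr h)), hfe]⟩,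
          g.1 b - g.1 a⟩
      left_inv := by
        rintro ⟨⟨f, hf⟩, c⟩
        have hfab : f a = f b := hf _ he a b rfl
        have hc : (if R b then f b + c else f b) - (if R a then f a + c else f a) = c := by
          rw [if_pos hRb, if_neg hbr, ← hfab, add_sub_cancel_left]
        refine Prod.ext (Subtype.ext (funext fun v => ?_)) hc
        dsimp only
        rw [hc]
        by_cases hR : R v
        · rw [if_pos hR, if_pos hR, add_sub_cancel_right]
        · rw [if_neg hR, if_neg hR]
      right_inv := by
        rintro ⟨g, hg⟩
        refine Subtype.ext (funext fun v => ?_)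
        dsimp only
        by_cases hR : R v
        · simp only [if_pos hR, sub_add_cancel]
        · simp only [if_neg hR] }
  have hcard := Nat.card_congr eqv
  rw [Nat.card_prod, Nat.card_eq_fintype_card (α := Fin (m+1)), Fintype.card_fin] at hcard
  rw [N, N]
  exact hcard.symm

open Classical in
lemma N_acyclic_mul {m : ℕ} (S : Finset (Sym2 V)) (hdiag : ∀ e ∈ S, ¬ e.IsDiag)
    (hac : (fromEdgeSet (↑S : Set (Sym2 V))).IsAcyclic) :
    N (m + 1) S * (m + 1) ^ S.card = (m + 1) ^ Fintype.card V := by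
  induction S using Finset.strongInduction with
  | _ S ih =>
  rcases S.eq_empty_or_nonempty with rfl | ⟨e, he⟩
  · simp only [Finset.card_empty, pow_zero, mul_one, N]
    have : ∀ f : V → Fin (m+1), mono f (∅ : Finset (Sym2 V)) := by
      intro f d hd
      exact absurd hd (Finset.notMem_empty _)
    rw [Nat.card_congr (Equiv.subtypeUnivEquiv this), Nat.card_eq_fintype_card,
      Fintype.card_fun, Fintype.card_fin]
  · have herase := N_erase_acyclic (m := m) hdiag hac he
    have hsub : S.erase e ⊆ S := Finset.erase_subset _ _
    have hdiag' : ∀ d ∈ S.erase e, ¬ d.IsDiag := fun d hd => hdiag d (hsub hd)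
    have hac' : (fromEdgeSet (↑(S.erase e) : Set (Sym2 V))).IsAcyclic := by
      refine isAcyclic_mono ?_ hac
      exact fromEdgeSet_mono (by exact_mod_cast hsub)
    have hpos : 0 < S.card := Finset.card_pos.mpr ⟨e, he⟩
    have hcard : S.card = (S.erase e).card + 1 := by
      rw [Finset.card_erase_of_mem he]
      omega
    have := ih (S.erase e) (Finset.erase_ssubset he) hdiag' hac'
    rw [herase] at this
    rw [← this, hcard, pow_succ]
    ring


lemma mem_cutset_iff {G T : SimpleGraph V} {e : Sym2 V} {x y : V}
    (hxy : s(x, y) ∈ G.edgeSet) :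
    s(x, y) ∈ cutset G T e ↔ ¬ (T.deleteEdges {e}).Reachable x y := by
  constructor
  · intro h
    exact h.2 x y rfl
  · intro h
    refine ⟨hxy, fun u v huv => ?_⟩
    rw [Sym2.eq_iff] at huv
    rcases huv with ⟨rfl, rfl⟩ | ⟨rfl, rfl⟩
    · exact h
    · exact fun hr => h hr.symm

lemma tree_not_reach {T : SimpleGraph V} (hT : T.IsTree) {e : Sym2 V} (he : e ∈ T.edgeSet)
    {u v : V} (huv : e = s(u, v)) : ¬ (T.deleteEdges {e}).Reachable u v := by
  subst huv
  rw [mem_edgeSet] at he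
  have := isAcyclic_iff_forall_adj_isBridge.mp hT.IsAcyclic he
  rw [isBridge_iff] at this
  exact this

/-- an edge of the tree distinct from `e` is not in `cutset G T e` -/
lemma cutset_tree_edge {G T : SimpleGraph V} (hT : T.IsTree) {e f : Sym2 V}
    (hf : f ∈ cutset G T e) (hfT : f ∈ T.edgeSet) : f = e := by
  by_contra hne
  induction f using Sym2.ind with
  | _ x y =>
  rw [mem_edgeSet] at hfT
  have hadj : (T.deleteEdges {e}).Adj x y := by
    rw [deleteEdges_adj]
    exact ⟨hfT, by simpa using hne⟩
  exact hf.2 x y rfl hadj.reachable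

lemma single_edge_le {G : SimpleGraph V} {f : Sym2 V} (hf : f ∈ G.edgeSet) :
    fromEdgeSet {f} ≤ G := by
  intro u v huv
  rw [fromEdgeSet_adj] at huv
  obtain ⟨h1, -⟩ := huv
  rw [Set.mem_singleton_iff] at h1
  rw [← mem_edgeSet, h1]
  exact hf

lemma fromEdgeSet_le_of_subset {G : SimpleGraph V} {A : Set (Sym2 V)} (h : A ⊆ G.edgeSet) :
    fromEdgeSet A ≤ G := by
  intro u v huv
  rw [fromEdgeSet_adj] at huv
  rw [← mem_edgeSet]
  exact h huv.1

/-- every forest inside a connected graph extends to a spanning tree -/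
lemma exists_spanning_tree [Finite V] {G : SimpleGraph V} (hG : G.Connected)
    {F : SimpleGraph V} (hF : F ≤ G) (hFac : F.IsAcyclic) :
    ∃ T : SimpleGraph V, F ≤ T ∧ IsSpanningTree G T := by
  classical
  set A : Set (SimpleGraph V) := {H | F ≤ H ∧ H ≤ G ∧ H.IsAcyclic} with hA
  have hfin : A.Finite := Set.toFinite _
  have hne : A.Nonempty := ⟨F, le_refl _, hF, hFac⟩
  obtain ⟨H, hHA, hmax⟩ := Set.Finite.exists_maximalFor
    (fun H : SimpleGraph V => H.edgeSet.ncard) A hfin hne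
  obtain ⟨hFH, hHG, hHac⟩ := hHA
  refine ⟨H, hFH, hHG, ?_, hHac⟩
  -- connectivity
  have hstep : ∀ a b : V, G.Adj a b → H.Reachable a b := by
    intro a b hab
    by_contra hr
    have hne' : a ≠ b := hab.ne
    set H' : SimpleGraph V := H ⊔ fromEdgeSet {s(a, b)} with hH'
    have hH'G : H' ≤ G := sup_le hHG (single_edge_le ((mem_edgeSet G).mpr hab))
    have hH'edges : H'.edgeSet = insert s(a, b) H.edgeSet := by
      have hsing : ({s(a, b)} : Set (Sym2 V)) \ {e : Sym2 V | e.IsDiag} = {s(a, b)} := by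
        ext g
        simp only [Set.mem_diff, Set.mem_singleton_iff, Set.mem_setOf_eq, and_iff_left_iff_imp]
        rintro rfl
        simpa using hne'
      rw [hH', edgeSet_sup, edgeSet_fromEdgeSet, Sym2.diagSet, hsing, Set.union_singleton]
    have hH'ac : H'.IsAcyclic := by
      intro v c hc
      by_cases hmem : s(a, b) ∈ c.edges
      · have := (adj_and_reachable_delete_edges_iff_exists_cycle (G := H')).mpr ⟨v, c, hc, hmem⟩
        refine hr (reach_transfer ?_ this.2)
        intro p q hpq
        rw [deleteEdges_adj, hH', sup_adj] at hpq
        rcases hpq.1 with h | h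
        · exact h.reachable
        · exact absurd ((fromEdgeSet_adj _).mp h).1 hpq.2
      · have hp : ∀ g ∈ c.edges, g ∈ H.edgeSet := by
          intro g hg
          have := c.edges_subset_edgeSet hg
          rw [hH'edges, Set.mem_insert_iff] at this
          rcases this with rfl | h
          · exact absurd hg hmem
          · exact h
        exact hHac (c.transfer H hp) (hc.transfer hp)
    have hH'A : H' ∈ A := ⟨le_trans hFH le_sup_left, hH'G, hH'ac⟩
    have hnotmem : s(a, b) ∉ H.edgeSet := by
      rw [mem_edgeSet]
      exact fun h => hr h.reachable
    have hlt : H.edgeSet.ncard < H'.edgeSet.ncard := by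
      rw [hH'edges]
      exact Set.ncard_lt_ncard (Set.ssubset_insert hnotmem) (Set.toFinite _)
    have := hmax hH'A (le_of_lt hlt)
    dsimp only at this
    omega
  rw [connected_iff]
  exact ⟨fun u v => reach_transfer hstep (hG.preconnected u v), hG.nonempty⟩


lemma reach_or {T : SimpleGraph V} {a b : V} :
    ∀ {v z : V} (_ : T.Walk v z),
      ((T.deleteEdges {s(a,b)}).Reachable z a ∨ (T.deleteEdges {s(a,b)}).Reachable z b) →
      ((T.deleteEdges {s(a,b)}).Reachable v a ∨ (T.deleteEdges {s(a,b)}).Reachable v b) := by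
  intro v z w
  induction w with
  | nil => exact id
  | @cons u x z h p ih =>
    intro hz
    by_cases hux : s(u, x) = s(a, b)
    · rw [Sym2.eq_iff] at hux
      rcases hux with ⟨rfl, rfl⟩ | ⟨rfl, rfl⟩
      · exact Or.inl (Reachable.refl _)
      · exact Or.inr (Reachable.refl _)
    · have hadj : (T.deleteEdges {s(a,b)}).Adj u x := by
        rw [deleteEdges_adj]
        exact ⟨h, by simpa using hux⟩
      rcases ih hz with h' | h'
      · exact Or.inl (hadj.reachable.trans h')
      · exact Or.inr (hadj.reachable.trans h')

lemma exchange {G T : SimpleGraph V} (hsp : IsSpanningTree G T) {e f : Sym2 V}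
    (he : e ∈ T.edgeSet) (hf : f ∈ cutset G T e) (hfe : f ≠ e) :
    IsSpanningTree G ((T.deleteEdges {e}) ⊔ fromEdgeSet {f}) ∧
      ((T.deleteEdges {e}) ⊔ fromEdgeSet {f}).edgeSet = (T.edgeSet \ {e}) ∪ {f} := by
  have hfT : f ∉ T.edgeSet := fun h => hfe (cutset_tree_edge hsp.2 hf h)
  have hfG : f ∈ G.edgeSet := hf.1
  have hfdiag : ¬ f.IsDiag := G.not_isDiag_of_mem_edgeSet hfG
  have hedges : ((T.deleteEdges {e}) ⊔ fromEdgeSet {f}).edgeSet = (T.edgeSet \ {e}) ∪ {f} := by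
    rw [edgeSet_sup, edgeSet_deleteEdges, edgeSet_fromEdgeSet]
    congr 1
    ext g
    simp only [Set.mem_diff, Set.mem_singleton_iff, Set.mem_setOf_eq, and_iff_left_iff_imp]
    rintro rfl
    exact hfdiag
  refine ⟨⟨sup_le ((deleteEdges_le _).trans hsp.1) (single_edge_le hfG), ?_, ?_⟩, hedges⟩
  · -- connected
    induction e using Sym2.ind with
    | _ a b =>
    induction f using Sym2.ind with
    | _ x y =>
    set L := T.deleteEdges {s(a, b)} with hL
    set T' := L ⊔ fromEdgeSet {s(x, y)} with hT'
    have hxy : x ≠ y := fun h => hfdiag (by rw [h]; exact Sym2.mk_isDiag_iff.mpr rfl)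
    have hdich : ∀ v : V, L.Reachable v a ∨ L.Reachable v b := by
      intro v
      obtain ⟨w⟩ := hsp.2.isConnected.preconnected v a
      exact reach_or w (Or.inl (Reachable.refl _))
    have hnxy : ¬ L.Reachable x y := hf.2 x y rfl
    have hadjT' : T'.Adj x y := by
      rw [hT', sup_adj, fromEdgeSet_adj]
      exact Or.inr ⟨rfl, hxy⟩
    have hab' : T'.Reachable a b := by
      rcases hdich x with hx | hx <;> rcases hdich y with hy | hy
      · exact absurd (hx.trans hy.symm) hnxy
      · exact ((hx.symm.mono le_sup_left).trans hadjT'.reachable).trans (hy.mono le_sup_left)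
      · exact ((hy.symm.mono le_sup_left).trans hadjT'.symm.reachable).trans
          (hx.mono le_sup_left)
      · exact absurd (hx.trans hy.symm) hnxy
    have hall : ∀ v : V, T'.Reachable v a := by
      intro v
      rcases hdich v with h | h
      · exact h.mono le_sup_left
      · exact (h.mono le_sup_left).trans hab'.symm
    rw [connected_iff]
    exact ⟨fun u v => (hall u).trans (hall v).symm, hsp.2.isConnected.nonempty⟩
  · -- acyclic
    induction e using Sym2.ind with
    | _ a b =>
    induction f using Sym2.ind with
    | _ x y =>
    set L := T.deleteEdges {s(a, b)} with hL
    intro v c hc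
    by_cases hmem : s(x, y) ∈ c.edges
    · have := (adj_and_reachable_delete_edges_iff_exists_cycle
        (G := L ⊔ fromEdgeSet {s(x, y)})).mpr ⟨v, c, hc, hmem⟩
      refine hf.2 x y rfl (reach_transfer ?_ this.2)
      intro p q hpq
      rw [deleteEdges_adj, sup_adj] at hpq
      rcases hpq.1 with h | h
      · exact h.reachable
      · exact absurd ((fromEdgeSet_adj _).mp h).1 hpq.2
    · have hp : ∀ g ∈ c.edges, g ∈ L.edgeSet := by
        intro g hg
        have := c.edges_subset_edgeSet hg
        rw [hedges, Set.mem_union, Set.mem_singleton_iff] at this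
        rcases this with h | h
        · rw [hL, edgeSet_deleteEdges]
          exact h
        · exact absurd (h ▸ hg) hmem
      exact isAcyclic_mono (deleteEdges_le _) hsp.2.IsAcyclic (c.transfer L hp)
        (hc.transfer hp)

lemma nbc_anti {G : SimpleGraph V} {A B : Set (Sym2 V)} (hAB : A ⊆ B)
    (h : IsNBC G B) : IsNBC G A := fun C hC hCA => h C hC (hCA.trans hAB)

lemma nbc_acyclic {G : SimpleGraph V} {S : Finset (Sym2 V)}
    (hSsub : (↑S : Set (Sym2 V)) ⊆ G.edgeSet) (h : IsNBC G ↑S) :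
    (fromEdgeSet (↑S : Set (Sym2 V))).IsAcyclic := by
  classical
  intro v c hc
  have hedge : ∀ g ∈ c.edges, g ∈ (↑S : Set (Sym2 V)) := by
    intro g hg
    have := c.edges_subset_edgeSet hg
    rw [edgeSet_fromEdgeSet] at this
    exact this.1
  have hp : ∀ g ∈ c.edges, g ∈ G.edgeSet := fun g hg => hSsub (hedge g hg)
  set c' := c.transfer G hp with hc'def
  have hc' : c'.IsCycle := hc.transfer hp
  have hcedges : c'.edges = c.edges := Walk.edges_transfer c hp
  have hnenil : c'.edges ≠ [] := by
    have h3 := hc'.three_le_length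
    rw [← Walk.length_edges] at h3
    exact List.ne_nil_of_length_pos (by omega)
  have hne : c'.edges.toFinset.Nonempty := by
    obtain ⟨g, hg⟩ := List.exists_mem_of_ne_nil _ hnenil
    exact ⟨g, List.mem_toFinset.mpr hg⟩
  set e0 := c'.edges.toFinset.min' hne with he0
  have he0mem : e0 ∈ c'.edges := List.mem_toFinset.mp (c'.edges.toFinset.min'_mem hne)
  refine h ({g | g ∈ c'.edges} \ {e0}) ⟨{g | g ∈ c'.edges}, e0, ⟨v, c', hc', rfl⟩, he0mem,
    fun g hg => c'.edges.toFinset.min'_le g (List.mem_toFinset.mpr hg), rfl⟩ ?_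
  intro g hg
  exact hedge g (by rw [← hcedges]; exact hg.1)

lemma cutset_of_cycle {G T : SimpleGraph V} (hT : T.IsTree) {C : Set (Sym2 V)} {g e : Sym2 V}
    (hC : IsCycleEdgeSet G C) (hgC : g ∈ C) (heC : e ∈ C) (hge : g ≠ e)
    (heT : e ∈ T.edgeSet) (hCT : ∀ x ∈ C, x ≠ g → x ∈ T.edgeSet) :
    g ∈ cutset G T e := by
  refine ⟨cycleEdgeSet_subset hC hgC, ?_⟩
  intro u v huv hr
  induction e using Sym2.ind with
  | _ a b =>
  refine tree_not_reach hT heT rfl ?_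
  refine reach_transfer ?_ (cycle_reach hC heC a b rfl)
  intro p q hpq
  rw [deleteEdges_adj, fromEdgeSet_adj] at hpq
  obtain ⟨⟨hpqC, hpqne⟩, hpqe⟩ := hpq
  by_cases hg : s(p, q) = g
  · have : s(p, q) = s(u, v) := hg.trans huv
    rw [Sym2.eq_iff] at this
    rcases this with ⟨rfl, rfl⟩ | ⟨rfl, rfl⟩
    · exact hr
    · exact hr.symm
  · have hadj : (T.deleteEdges {s(a, b)}).Adj p q := by
      rw [deleteEdges_adj]
      refine ⟨(mem_edgeSet T).mp (hCT _ hpqC hg), by simpa using hpqe⟩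
    exact hadj.reachable


open Classical in
lemma exists_good_tree {G : SimpleGraph V} (hG : G.Connected) (S : Finset (Sym2 V))
    (hSsub : (↑S : Set (Sym2 V)) ⊆ G.edgeSet) (hSnbc : IsNBC G ↑S) :
    ∃ T : SimpleGraph V, IsSpanningTree G T ∧ IsNBC G T.edgeSet ∧
      (↑S : Set (Sym2 V)) ⊆ T.edgeSet ∧
      ∀ e ∈ T.edgeSet, e ∉ S → InternallyActive G T e := by
  have hFle : fromEdgeSet (↑S : Set (Sym2 V)) ≤ G := fromEdgeSet_le_of_subset hSsub
  have hFac := nbc_acyclic hSsub hSnbc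
  set 𝒮 : Set (SimpleGraph V) := {T | IsSpanningTree G T ∧ (↑S : Set (Sym2 V)) ⊆ T.edgeSet}
    with h𝒮
  have hne : 𝒮.Nonempty := by
    obtain ⟨T, hFT, hT⟩ := exists_spanning_tree hG hFle hFac
    refine ⟨T, hT, ?_⟩
    intro g hg
    have : g ∈ (fromEdgeSet (↑S : Set (Sym2 V))).edgeSet := by
      rw [edgeSet_fromEdgeSet]
      exact ⟨hg, G.not_isDiag_of_mem_edgeSet (hSsub hg)⟩
    exact edgeSet_mono hFT this
  set rnk : Sym2 V → ℕ := fun g => ((EG G).filter (fun x => x ≤ g)).card with hrnk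
  set W : SimpleGraph V → ℕ := fun T => ∑ g ∈ EG T, 2 ^ rnk g with hW
  obtain ⟨T, hTmem, hmin⟩ := Set.Finite.exists_minimalFor W 𝒮 (Set.toFinite _) hne
  obtain ⟨hsp, hST⟩ := hTmem
  have hactive : ∀ e ∈ T.edgeSet, e ∉ S → InternallyActive G T e := by
    intro e heT heS
    by_contra hact
    rw [InternallyActive] at hact
    push_neg at hact
    obtain ⟨f, hfcut, hflt⟩ := hact heT
    have hfe : f ≠ e := hflt.ne
    obtain ⟨hsp', hedges⟩ := exchange hsp heT hfcut hfe
    set T' := (T.deleteEdges {e}) ⊔ fromEdgeSet {f} with hT'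
    have hfT : f ∉ T.edgeSet := fun h => hfe (cutset_tree_edge hsp.2 hfcut h)
    have hT'mem : T' ∈ 𝒮 := by
      refine ⟨hsp', ?_⟩
      intro g hg
      rw [hedges]
      exact Or.inl ⟨hST hg, fun h => heS (Finset.mem_coe.mp ((Set.mem_singleton_iff.mp h) ▸ hg))⟩
    have hEG : EG T' = insert f ((EG T).erase e) := by
      ext g
      rw [mem_EG, hedges]
      simp only [Set.mem_union, Set.mem_diff, Set.mem_singleton_iff, Finset.mem_insert,
        Finset.mem_erase, mem_EG]
      tauto
    have hfnot : f ∉ (EG T).erase e := fun h => hfT (mem_EG.mp (Finset.mem_of_mem_erase h))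
    have heEG : e ∈ EG T := mem_EG.mpr heT
    have hrank : rnk f < rnk e := by
      rw [hrnk]
      refine Finset.card_lt_card ?_
      rw [Finset.ssubset_iff_of_subset]
      · refine ⟨e, ?_, ?_⟩
        · rw [Finset.mem_filter]
          exact ⟨mem_EG.mpr (edgeSet_mono hsp.1 heT), le_refl e⟩
        · rw [Finset.mem_filter]
          rintro ⟨-, h⟩
          exact absurd h (not_le.mpr hflt)
      · intro x hx
        rw [Finset.mem_filter] at hx ⊢
        exact ⟨hx.1, hx.2.trans hflt.le⟩
    have hWlt : W T' < W T := by
      rw [hW]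
      simp only
      rw [hEG, Finset.sum_insert hfnot, ← Finset.add_sum_erase _ _ heEG]
      have : (2:ℕ) ^ rnk f < 2 ^ rnk e := Nat.pow_lt_pow_right one_lt_two hrank
      omega
    exact absurd (hmin hT'mem hWlt.le) (not_le.mpr hWlt)
  refine ⟨T, hsp, ?_, hST, hactive⟩
  -- NBC
  rintro B ⟨C, g, hC, hgC, hgmin, rfl⟩ hBsub
  have hgT : g ∉ T.edgeSet := by
    intro h
    have hCT : ∀ x ∈ C, x ∈ T.edgeSet := by
      intro x hx
      by_cases hxg : x = g
      · rwa [hxg]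
      · exact hBsub ⟨hx, hxg⟩
    obtain ⟨v0, w, hw, hCeq⟩ := hC
    have hp : ∀ x ∈ w.edges, x ∈ T.edgeSet := by
      intro x hx
      exact hCT x (by rw [hCeq]; exact hx)
    exact hsp.2.IsAcyclic (w.transfer T hp) (hw.transfer hp)
  have hnot : ¬ (C \ {g} ⊆ (↑S : Set (Sym2 V))) :=
    fun hss => hSnbc _ ⟨C, g, hC, hgC, hgmin, rfl⟩ hss
  obtain ⟨e, heC, heS⟩ := Set.not_subset.mp hnot
  have heT : e ∈ T.edgeSet := hBsub heC
  have hge : g ≠ e := fun h => heC.2 (by rw [h]; rfl)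
  have hcut : g ∈ cutset G T e := by
    refine cutset_of_cycle hsp.2 hC hgC heC.1 hge heT ?_
    intro x hx hxg
    by_cases hxe : x = e
    · rwa [hxe]
    · exact hBsub ⟨hx, hxg⟩
  have h1 : e ≤ g := (hactive e heT (fun h => heS h)).2 g hcut
  have h2 : g ≤ e := hgmin e heC.1
  exact hge (le_antisymm h2 h1)

lemma tree_unique_core {G T T' : SimpleGraph V}
    (hT : IsSpanningTree G T) (hT' : IsSpanningTree G T')
    {S : Finset (Sym2 V)} (hST : (↑S : Set (Sym2 V)) ⊆ T.edgeSet)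
    (hST' : (↑S : Set (Sym2 V)) ⊆ T'.edgeSet)
    (hA : ∀ e ∈ T.edgeSet, e ∉ S → InternallyActive G T e)
    (hA' : ∀ e ∈ T'.edgeSet, e ∉ S → InternallyActive G T' e)
    {e : Sym2 V} (heT : e ∈ T.edgeSet) (heT' : e ∉ T'.edgeSet)
    (hmin : ∀ f : Sym2 V,
      ((f ∈ T.edgeSet ∧ f ∉ T'.edgeSet) ∨ (f ∈ T'.edgeSet ∧ f ∉ T.edgeSet)) → e ≤ f) :
    False := by
  classical
  have heS : e ∉ S := fun h => heT' (hST' h)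
  have hact := hA e heT heS
  induction e using Sym2.ind with
  | _ a b =>
  have hnab : ¬ (T.deleteEdges {s(a, b)}).Reachable a b := tree_not_reach hT.2 heT rfl
  obtain ⟨w0⟩ := hT'.2.isConnected.preconnected a b
  obtain ⟨x, y, hadjxy, hmemP, hnreach⟩ := cross (w0.toPath : T'.Walk a b) hnab
  have hfT'mem : s(x, y) ∈ T'.edgeSet := (mem_edgeSet T').mpr hadjxy
  have hfG : s(x, y) ∈ G.edgeSet := edgeSet_mono hT'.1 hfT'mem
  have hfcut : s(x, y) ∈ cutset G T s(a, b) := (mem_cutset_iff hfG).mpr hnreach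
  have hle : s(a, b) ≤ s(x, y) := hact.2 _ hfcut
  have hfne : s(x, y) ≠ s(a, b) := fun h => heT' (h ▸ hfT'mem)
  have hfT : s(x, y) ∉ T.edgeSet := fun h => hfne (cutset_tree_edge hT.2 hfcut h)
  have hlt : s(a, b) < s(x, y) := lt_of_le_of_ne hle (Ne.symm hfne)
  have hfS : s(x, y) ∉ S := fun h => hfT (hST h)
  have hact' := hA' s(x, y) hfT'mem hfS
  have hecut' : s(a, b) ∈ cutset G T' s(x, y) := by
    refine (mem_cutset_iff (edgeSet_mono hT.1 heT)).mpr ?_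
    intro hr'
    obtain ⟨q⟩ := hr'
    have hqedges : ∀ g ∈ (q.toPath : (T'.deleteEdges {s(x,y)}).Walk a b).edges,
        g ∈ T'.edgeSet := by
      intro g hg
      have := Walk.edges_subset_edgeSet _ hg
      rw [edgeSet_deleteEdges] at this
      exact this.1
    set Qt := ((q.toPath : (T'.deleteEdges {s(x,y)}).Walk a b)).transfer T' hqedges with hQt
    have hQtpath : Qt.IsPath := (Walk.IsPath.transfer _ (q.toPath).2)
    have huniq := hT'.2.IsAcyclic.path_unique w0.toPath ⟨Qt, hQtpath⟩
    have hmemQt : s(x, y) ∈ Qt.edges := by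
      rw [← Subtype.coe_mk (p := Walk.IsPath) Qt hQtpath, ← huniq]
      exact hmemP
    rw [hQt, Walk.edges_transfer] at hmemQt
    have := Walk.edges_subset_edgeSet _ hmemQt
    rw [edgeSet_deleteEdges] at this
    exact this.2 rfl
  have hle' : s(x, y) ≤ s(a, b) := hact'.2 _ hecut'
  exact absurd hle' (not_le.mpr hlt)

open Classical in
lemma tree_unique {G T T' : SimpleGraph V}
    (hT : IsSpanningTree G T) (hT' : IsSpanningTree G T')
    {S : Finset (Sym2 V)} (hST : (↑S : Set (Sym2 V)) ⊆ T.edgeSet)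
    (hST' : (↑S : Set (Sym2 V)) ⊆ T'.edgeSet)
    (hA : ∀ e ∈ T.edgeSet, e ∉ S → InternallyActive G T e)
    (hA' : ∀ e ∈ T'.edgeSet, e ∉ S → InternallyActive G T' e) : T = T' := by
  by_contra hne
  have hd : symmDiff T.edgeSet T'.edgeSet ≠ ∅ := by
    intro h
    rw [← Set.bot_eq_empty] at h
    exact hne (edgeSet_inj.mp (symmDiff_eq_bot.mp h))
  have hdne : (symmDiff T.edgeSet T'.edgeSet).Nonempty := Set.nonempty_iff_ne_empty.mpr hd
  obtain ⟨x0, hx0⟩ := hdne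
  set Δ := (Set.toFinite (symmDiff T.edgeSet T'.edgeSet)).toFinset with hΔ
  have hΔne : Δ.Nonempty := ⟨x0, (Set.Finite.mem_toFinset _).mpr hx0⟩
  set e := Δ.min' hΔne with he
  have hemem : e ∈ symmDiff T.edgeSet T'.edgeSet :=
    (Set.Finite.mem_toFinset _).mp (Δ.min'_mem hΔne)
  have hminle : ∀ f : Sym2 V,
      ((f ∈ T.edgeSet ∧ f ∉ T'.edgeSet) ∨ (f ∈ T'.edgeSet ∧ f ∉ T.edgeSet)) → e ≤ f := by
    intro f hf
    refine Δ.min'_le f ((Set.Finite.mem_toFinset _).mpr ?_)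
    rw [Set.mem_symmDiff]
    tauto
  rw [Set.mem_symmDiff] at hemem
  rcases hemem with ⟨h1, h2⟩ | ⟨h1, h2⟩
  · exact tree_unique_core hT hT' hST hST' hA hA' h1 h2 hminle
  · refine tree_unique_core hT' hT hST' hST hA' hA h1 h2 ?_
    intro f hf
    exact hminle f (Or.symm hf)


lemma eq_of_reach {L : SimpleGraph V} {α : Type*} {f : V → α}
    (h : ∀ a b : V, L.Adj a b → f a = f b) {u v : V} (r : L.Reachable u v) : f u = f v := by
  obtain ⟨w⟩ := r
  induction w with
  | nil => rfl
  | cons h' p ih => exact (h _ _ h').trans ih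

section Involution

variable [Fintype V] [LinearOrder (Sym2 V)]

lemma mono_insert_iff {lam : ℕ} {G : SimpleGraph V} {S : Finset (Sym2 V)} {e : Sym2 V}
    (h : isCand G S e) (f : V → Fin lam) : mono f (insert e S) ↔ mono f S := by
  constructor
  · exact fun hm d hd => hm d (Finset.mem_insert_of_mem hd)
  · intro hm d hd u v huv
    rcases Finset.mem_insert.mp hd with rfl | hdS
    · obtain ⟨C, hC, heC, hmin, hsub⟩ := h
      refine eq_of_reach ?_ (cycle_reach hC heC u v huv)
      intro p q hpq
      rw [deleteEdges_adj, fromEdgeSet_adj] at hpq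
      obtain ⟨⟨hpqC, hpqne⟩, hpqe⟩ := hpq
      exact hm _ (hsub ⟨hpqC, by simpa using hpqe⟩) p q rfl
    · exact hm d hdS u v huv

lemma N_insert_cand {lam : ℕ} {G : SimpleGraph V} {S : Finset (Sym2 V)} {e : Sym2 V}
    (h : isCand G S e) : N lam (insert e S) = N lam S :=
  Nat.card_congr (Equiv.subtypeEquivRight (fun f => mono_insert_iff h f))

noncomputable def candF (G : SimpleGraph V) (S : Finset (Sym2 V)) : Finset (Sym2 V) :=
  (Set.toFinite {e : Sym2 V | isCand G S e}).toFinset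

lemma mem_candF {G : SimpleGraph V} {S : Finset (Sym2 V)} {e : Sym2 V} :
    e ∈ candF G S ↔ isCand G S e := Set.Finite.mem_toFinset _

lemma candF_nonempty_iff {G : SimpleGraph V} {S : Finset (Sym2 V)} :
    (candF G S).Nonempty ↔ ¬ IsNBC G (↑S : Set (Sym2 V)) := by
  rw [not_nbc_iff]
  constructor
  · rintro ⟨e, he⟩
    exact ⟨e, mem_candF.mp he⟩
  · rintro ⟨e, he⟩
    exact ⟨e, mem_candF.mpr he⟩

noncomputable def phi (G : SimpleGraph V) (S : Finset (Sym2 V)) : Finset (Sym2 V) :=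
  if h : (candF G S).Nonempty then
    (if (candF G S).min' h ∈ S then S.erase ((candF G S).min' h)
     else insert ((candF G S).min' h) S)
  else S

lemma phi_props {G : SimpleGraph V} {S : Finset (Sym2 V)}
    (hS : ¬ IsNBC G (↑S : Set (Sym2 V))) :
    (¬ IsNBC G (↑(phi G S) : Set (Sym2 V))) ∧ phi G (phi G S) = S ∧
      (∀ lam : ℕ, N lam (phi G S) = N lam S) ∧
      ((phi G S).card = S.card + 1 ∨ S.card = (phi G S).card + 1) ∧
      (S ⊆ EG G → phi G S ⊆ EG G) := by
  have hne : (candF G S).Nonempty := candF_nonempty_iff.mpr hS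
  set e := (candF G S).min' hne with he_def
  have he : isCand G S e := mem_candF.mp ((candF G S).min'_mem hne)
  have hmin : ∀ f, isCand G S f → e ≤ f := fun f hf =>
    (candF G S).min'_le f (mem_candF.mpr hf)
  by_cases heS : e ∈ S
  · -- erase case
    have hphi : phi G S = S.erase e := by
      rw [phi]
      simp only [dif_pos hne, ← he_def, if_pos heS]
    have he' : isCand G (S.erase e) e := by
      obtain ⟨C, hC, heC, hcmin, hsub⟩ := he
      refine ⟨C, hC, heC, hcmin, ?_⟩
      intro g hg
      have hgS := hsub hg
      rw [Finset.coe_erase]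
      exact ⟨hgS, hg.2⟩
    have hcand' : ∀ f, isCand G (S.erase e) f → isCand G S f := fun f hf =>
      isCand.mono (Finset.erase_subset _ _) hf
    have hne' : (candF G (S.erase e)).Nonempty := ⟨e, mem_candF.mpr he'⟩
    have hmin' : (candF G (S.erase e)).min' hne' = e := by
      refine le_antisymm ((candF G (S.erase e)).min'_le e (mem_candF.mpr he')) ?_
      exact hmin _ (hcand' _ (mem_candF.mp ((candF G (S.erase e)).min'_mem hne')))
    have hnotNBC : ¬ IsNBC G (↑(phi G S) : Set (Sym2 V)) := by
      rw [hphi]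
      exact candF_nonempty_iff.mp hne'
    refine ⟨hnotNBC, ?_, ?_, ?_, ?_⟩
    · rw [hphi, phi]
      simp only [dif_pos hne', hmin', if_neg (Finset.notMem_erase e S)]
      exact Finset.insert_erase heS
    · intro lam
      rw [hphi, ← N_insert_cand he', Finset.insert_erase heS]
    · right
      rw [hphi, Finset.card_erase_of_mem heS]
      have : 0 < S.card := Finset.card_pos.mpr ⟨e, heS⟩
      omega
    · intro hsub
      rw [hphi]
      exact (Finset.erase_subset _ _).trans hsub
  · -- insert case
    have hphi : phi G S = insert e S := by
      rw [phi]
      simp only [dif_pos hne, ← he_def, if_neg heS]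
    have he' : isCand G (insert e S) e := isCand.mono (Finset.subset_insert _ _) he
    have hne' : (candF G (insert e S)).Nonempty := ⟨e, mem_candF.mpr he'⟩
    have hmin' : (candF G (insert e S)).min' hne' = e := by
      refine le_antisymm ((candF G (insert e S)).min'_le e (mem_candF.mpr he')) ?_
      by_contra hlt
      push_neg at hlt
      have hf := mem_candF.mp ((candF G (insert e S)).min'_mem hne')
      have := cand_elim he hf hlt
      exact absurd (hmin _ this) (not_le.mpr hlt)
    have hnotNBC : ¬ IsNBC G (↑(phi G S) : Set (Sym2 V)) := by
      rw [hphi]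
      exact candF_nonempty_iff.mp hne'
    refine ⟨hnotNBC, ?_, ?_, ?_, ?_⟩
    · rw [hphi, phi]
      simp only [dif_pos hne', hmin', if_pos (Finset.mem_insert_self e S)]
      exact Finset.erase_insert heS
    · intro lam
      rw [hphi, N_insert_cand he]
    · left
      rw [hphi, Finset.card_insert_of_notMem heS]
    · intro hsub
      rw [hphi]
      intro g hg
      rcases Finset.mem_insert.mp hg with rfl | hgS
      · exact mem_EG.mpr (isCand.mem_edgeSet he)
      · exact hsub hgS

open Classical in
theorem part2 (G : SimpleGraph V) (lam : ℕ) :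
    ∑ S ∈ (EG G).powerset, (-1 : ℤ) ^ S.card * (N lam S : ℤ) =
      ∑ S ∈ (EG G).powerset.filter
          (fun S : Finset (Sym2 V) => IsNBC G (↑S : Set (Sym2 V))),
        (-1 : ℤ) ^ S.card * (N lam S : ℤ) := by
  rw [← Finset.sum_filter_add_sum_filter_not ((EG G).powerset)
    (fun S : Finset (Sym2 V) => IsNBC G (↑S : Set (Sym2 V)))]
  have h0 : ∑ S ∈ (EG G).powerset.filter
      (fun S : Finset (Sym2 V) => ¬ IsNBC G (↑S : Set (Sym2 V))),
      (-1 : ℤ) ^ S.card * (N lam S : ℤ) = 0 := by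
    refine Finset.sum_involution (fun S _ => phi G S) ?_ ?_ ?_ ?_
    · intro S hS
      rw [Finset.mem_filter] at hS
      obtain ⟨-, hP, hNeq, hcard, -⟩ := phi_props hS.2
      rw [hNeq lam]
      rcases hcard with h | h
      · rw [h, pow_succ]
        ring
      · rw [h, pow_succ]
        ring
    · intro S hS _
      rw [Finset.mem_filter] at hS
      obtain ⟨-, -, -, hcard, -⟩ := phi_props hS.2
      intro heq
      have heq' : phi G S = S := heq
      rw [heq'] at hcard
      omega
    · intro S hS
      rw [Finset.mem_filter] at hS ⊢
      obtain ⟨hSp, hSn⟩ := hS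
      rw [Finset.mem_powerset] at hSp
      obtain ⟨hnbc, -, -, -, hsub⟩ := phi_props hSn
      exact ⟨Finset.mem_powerset.mpr (hsub hSp), hnbc⟩
    · intro S hS
      rw [Finset.mem_filter] at hS
      exact (phi_props hS.2).2.1
  rw [h0, add_zero]

end Involution


section Final

variable [Fintype V] [LinearOrder (Sym2 V)]

lemma sum_pow_aux {α : Type*} [DecidableEq α] (s : Finset α) (x y : ℤ) :
    ∑ A ∈ s.powerset, x ^ A.card * y ^ (s.card - A.card) = (x + y) ^ s.card := by
  induction s using Finset.induction_on with
  | empty => simp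
  | @insert a s ha ih =>
    rw [Finset.powerset_insert, Finset.sum_union, Finset.sum_image]
    · have h1 : ∀ A ∈ s.powerset,
          x ^ A.card * y ^ ((insert a s).card - A.card) =
            y * (x ^ A.card * y ^ (s.card - A.card)) := by
        intro A hA
        have hAs : A.card ≤ s.card := Finset.card_le_card (Finset.mem_powerset.mp hA)
        rw [Finset.card_insert_of_notMem ha]
        rw [show s.card + 1 - A.card = (s.card - A.card) + 1 by omega, pow_succ]
        ring
      have h2 : ∀ A ∈ s.powerset,
          x ^ (insert a A).card * y ^ ((insert a s).card - (insert a A).card) =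
            x * (x ^ A.card * y ^ (s.card - A.card)) := by
        intro A hA
        have hAs : A.card ≤ s.card := Finset.card_le_card (Finset.mem_powerset.mp hA)
        have haA : a ∉ A := fun h => ha (Finset.mem_powerset.mp hA h)
        rw [Finset.card_insert_of_notMem ha, Finset.card_insert_of_notMem haA]
        rw [show s.card + 1 - (A.card + 1) = s.card - A.card by omega, pow_succ]
        ring
      rw [Finset.sum_congr rfl h1, Finset.sum_congr rfl h2, ← Finset.mul_sum, ← Finset.mul_sum,
        ih, Finset.card_insert_of_notMem ha, pow_succ]
      ring
    · -- injectivity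
      intro A hA B hB hAB
      have haA : a ∉ A := fun h => ha (Finset.mem_powerset.mp hA h)
      have haB : a ∉ B := fun h => ha (Finset.mem_powerset.mp hB h)
      rw [← Finset.erase_insert haA, ← Finset.erase_insert haB, hAB]
    · -- disjointness
      rw [Finset.disjoint_left]
      intro A hA hA'
      rw [Finset.mem_powerset] at hA
      obtain ⟨B, hB, rfl⟩ := Finset.mem_image.mp hA'
      exact ha (hA (Finset.mem_insert_self a B))

lemma N_acyclic_eq {m : ℕ} (S : Finset (Sym2 V)) (hdiag : ∀ e ∈ S, ¬ e.IsDiag)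
    (hac : (fromEdgeSet (↑S : Set (Sym2 V))).IsAcyclic) (hk : S.card ≤ Fintype.card V) :
    N (m + 1) S = (m + 1) ^ (Fintype.card V - S.card) := by
  have h1 := N_acyclic_mul (m := m) S hdiag hac
  have h2 : ((m:ℕ) + 1) ^ Fintype.card V =
      (m + 1) ^ (Fintype.card V - S.card) * (m + 1) ^ S.card := by
    rw [← pow_add, Nat.sub_add_cancel hk]
  rw [h2] at h1
  exact Nat.eq_of_mul_eq_mul_right (Nat.pow_pos (Nat.succ_pos m)) h1

/-- edge finset of a spanning tree has `n - 1` elements -/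
lemma EG_tree_card {G T : SimpleGraph V} (hsp : IsSpanningTree G T) :
    (EG T).card + 1 = Fintype.card V := by
  classical
  haveI : Fintype T.edgeSet := Fintype.ofFinite _
  have : EG T = T.edgeFinset := by
    ext g
    rw [mem_EG, mem_edgeFinset]
  rw [this]
  exact hsp.2.card_edgeFinset

noncomputable def IAF (G T : SimpleGraph V) : Finset (Sym2 V) :=
  (Set.toFinite {e : Sym2 V | InternallyActive G T e}).toFinset

noncomputable def INF (G T : SimpleGraph V) : Finset (Sym2 V) :=
  (Set.toFinite {e : Sym2 V | e ∈ T.edgeSet ∧ ¬ InternallyActive G T e}).toFinset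

lemma mem_IAF {G T : SimpleGraph V} {e : Sym2 V} :
    e ∈ IAF G T ↔ InternallyActive G T e := Set.Finite.mem_toFinset _

lemma mem_INF {G T : SimpleGraph V} {e : Sym2 V} :
    e ∈ INF G T ↔ e ∈ T.edgeSet ∧ ¬ InternallyActive G T e := Set.Finite.mem_toFinset _

lemma disjoint_INF_IAF {G T : SimpleGraph V} : Disjoint (INF G T) (IAF G T) := by
  rw [Finset.disjoint_left]
  intro e he he'
  exact (mem_INF.mp he).2 (mem_IAF.mp he')

lemma INF_union_IAF {G T : SimpleGraph V} : INF G T ∪ IAF G T = EG T := by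
  ext e
  rw [Finset.mem_union, mem_INF, mem_IAF, mem_EG]
  constructor
  · rintro (⟨h, -⟩ | h)
    · exact h
    · exact h.1
  · intro h
    by_cases ha : InternallyActive G T e
    · exact Or.inr ha
    · exact Or.inl ⟨h, ha⟩

lemma INF_card_add_IAF_card {G T : SimpleGraph V} :
    (INF G T).card + (IAF G T).card = (EG T).card := by
  rw [← Finset.card_union_of_disjoint disjoint_INF_IAF, INF_union_IAF]

lemma edge_nonempty {G : SimpleGraph V} (hconn : G.Connected)
    (hn2 : 2 ≤ Fintype.card V) : (EG G).Nonempty := by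
  obtain ⟨a, b, hab⟩ := Fintype.exists_pair_of_one_lt_card (α := V) (by omega)
  obtain ⟨w⟩ := hconn.preconnected a b
  cases w with
  | nil => exact absurd rfl hab
  | cons h p => exact ⟨_, mem_EG.mpr ((mem_edgeSet G).mpr h)⟩

/-- the minimal edge of `G` belongs to every NBC spanning tree and is internally active -/
lemma min_edge_active {G T : SimpleGraph V} (hconn : G.Connected)
    (hn2 : 2 ≤ Fintype.card V) (hT : IsNBCSpanningTree G T) :
    (IAF G T).Nonempty := by
  classical
  have hne := edge_nonempty hconn hn2
  obtain ⟨a, b, hab⟩ : ∃ a b : V, (EG G).min' hne = s(a, b) :=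
    Sym2.exists.mp ⟨(EG G).min' hne, rfl⟩
  have he0G : s(a, b) ∈ G.edgeSet := hab ▸ mem_EG.mp ((EG G).min'_mem hne)
  have he0min : ∀ f ∈ G.edgeSet, s(a, b) ≤ f := fun f hf =>
    hab ▸ (EG G).min'_le f (mem_EG.mpr hf)
  have he0T : s(a, b) ∈ T.edgeSet := by
    by_contra he0T
    have hadj : G.Adj a b := (mem_edgeSet G).mp he0G
    obtain ⟨w⟩ := hT.1.2.isConnected.preconnected a b
    have hedgesub : ∀ g ∈ (w.toPath : T.Walk a b).edges, g ∈ G.edgeSet :=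
      fun g hg => edgeSet_mono hT.1.1 (Walk.edges_subset_edgeSet _ hg)
    set P := (w.toPath : T.Walk a b).transfer G hedgesub with hP
    have hPpath : P.IsPath := Walk.IsPath.transfer _ (w.toPath).2
    have hPedges : P.edges = (w.toPath : T.Walk a b).edges := Walk.edges_transfer _ _
    have hnotmem : s(b, a) ∉ P.edges := by
      rw [hPedges]
      intro h
      exact he0T (by rw [Sym2.eq_swap]; exact Walk.edges_subset_edgeSet _ h)
    have hcyc : (Walk.cons hadj.symm P).IsCycle := by
      rw [Walk.cons_isCycle_iff]
      exact ⟨hPpath, hnotmem⟩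
    refine hT.2 ({g | g ∈ (Walk.cons hadj.symm P).edges} \ {s(a,b)})
      ⟨{g | g ∈ (Walk.cons hadj.symm P).edges}, s(a,b), ⟨b, _, hcyc, rfl⟩, ?_, ?_, rfl⟩ ?_
    · rw [Set.mem_setOf_eq, Walk.edges_cons, Sym2.eq_swap]
      exact List.mem_cons_self
    · intro f hf
      rw [Set.mem_setOf_eq] at hf
      exact he0min f (Walk.edges_subset_edgeSet _ hf)
    · rintro g ⟨hg, hg2⟩
      rw [Set.mem_setOf_eq, Walk.edges_cons, List.mem_cons] at hg
      rcases hg with rfl | hg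
      · exact absurd (Set.mem_singleton_iff.mpr (Sym2.eq_swap)) hg2
      · rw [hPedges] at hg
        exact Walk.edges_subset_edgeSet _ hg
  refine ⟨s(a, b), mem_IAF.mpr ⟨he0T, fun f hf => he0min f hf.1⟩⟩

end Final


section Assembly

variable [Fintype V] [LinearOrder (Sym2 V)]

open Classical in
noncomputable def tau (G : SimpleGraph V) (S : Finset (Sym2 V)) : SimpleGraph V :=
  if h : ∃ T : SimpleGraph V, IsSpanningTree G T ∧ IsNBC G T.edgeSet ∧
      ((↑S : Set (Sym2 V)) ⊆ T.edgeSet) ∧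
      (∀ e ∈ T.edgeSet, e ∉ S → InternallyActive G T e) then h.choose else ⊥

lemma tau_spec {G : SimpleGraph V} {S : Finset (Sym2 V)}
    (h : ∃ T : SimpleGraph V, IsSpanningTree G T ∧ IsNBC G T.edgeSet ∧
      ((↑S : Set (Sym2 V)) ⊆ T.edgeSet) ∧
      (∀ e ∈ T.edgeSet, e ∉ S → InternallyActive G T e)) :
    IsSpanningTree G (tau G S) ∧ IsNBC G (tau G S).edgeSet ∧
      ((↑S : Set (Sym2 V)) ⊆ (tau G S).edgeSet) ∧
      (∀ e ∈ (tau G S).edgeSet, e ∉ S → InternallyActive G (tau G S) e) := by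
  rw [tau, dif_pos h]
  exact h.choose_spec

lemma tau_eq {G : SimpleGraph V} {S : Finset (Sym2 V)} {T : SimpleGraph V}
    (hT : IsSpanningTree G T) (hTnbc : IsNBC G T.edgeSet)
    (hST : (↑S : Set (Sym2 V)) ⊆ T.edgeSet)
    (hact : ∀ e ∈ T.edgeSet, e ∉ S → InternallyActive G T e) :
    tau G S = T := by
  have hex : ∃ T' : SimpleGraph V, IsSpanningTree G T' ∧ IsNBC G T'.edgeSet ∧
      ((↑S : Set (Sym2 V)) ⊆ T'.edgeSet) ∧
      (∀ e ∈ T'.edgeSet, e ∉ S → InternallyActive G T' e) := ⟨T, hT, hTnbc, hST, hact⟩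
  obtain ⟨h1, h2, h3, h4⟩ := tau_spec hex
  exact tree_unique h1 hT h3 hST h4 hact

lemma exists_tau {G : SimpleGraph V} (hG : G.Connected) {S : Finset (Sym2 V)}
    (hsub : S ⊆ EG G) (hnbc : IsNBC G (↑S : Set (Sym2 V))) :
    ∃ T : SimpleGraph V, IsSpanningTree G T ∧ IsNBC G T.edgeSet ∧
      ((↑S : Set (Sym2 V)) ⊆ T.edgeSet) ∧
      (∀ e ∈ T.edgeSet, e ∉ S → InternallyActive G T e) := by
  refine exists_good_tree hG S ?_ hnbc
  intro g hg
  exact mem_EG.mp (hsub hg)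

open Classical in
lemma fiber_eq {G : SimpleGraph V} (hG : G.Connected) {T : SimpleGraph V}
    (hT : IsNBCSpanningTree G T) :
    ((EG G).powerset.filter (fun S : Finset (Sym2 V) => IsNBC G (↑S : Set (Sym2 V)))).filter
        (fun S => tau G S = T) =
      (IAF G T).powerset.image (fun A => INF G T ∪ A) := by
  classical
  ext S
  simp only [Finset.mem_filter, Finset.mem_powerset, Finset.mem_image]
  constructor
  · rintro ⟨⟨hSp, hSnbc⟩, htau⟩
    obtain ⟨h1, h2, h3, h4⟩ := tau_spec (exists_tau hG hSp hSnbc)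
    rw [htau] at h3 h4
    have hINFsub : INF G T ⊆ S := by
      intro e he
      obtain ⟨heT, hna⟩ := mem_INF.mp he
      by_contra heS
      exact hna (h4 e heT heS)
    refine ⟨S \ INF G T, ?_, ?_⟩
    · intro e he
      obtain ⟨heS, heI⟩ := Finset.mem_sdiff.mp he
      have heT : e ∈ T.edgeSet := h3 heS
      rw [mem_IAF]
      by_contra hna
      exact heI (mem_INF.mpr ⟨heT, hna⟩)
    · exact Finset.union_sdiff_of_subset hINFsub
  · rintro ⟨A, hA, rfl⟩
    have hsubT : (↑(INF G T ∪ A) : Set (Sym2 V)) ⊆ T.edgeSet := by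
      intro e he
      rw [Finset.coe_union, Set.mem_union] at he
      rcases he with he | he
      · exact (mem_INF.mp he).1
      · exact (mem_IAF.mp (hA he)).1
    have hact : ∀ e ∈ T.edgeSet, e ∉ INF G T ∪ A → InternallyActive G T e := by
      intro e heT heS
      by_contra hna
      exact heS (Finset.mem_union_left _ (mem_INF.mpr ⟨heT, hna⟩))
    refine ⟨⟨?_, nbc_anti hsubT hT.2⟩, tau_eq hT.1 hT.2 hsubT hact⟩
    intro e he
    exact mem_EG.mpr (edgeSet_mono hT.1.1 (hsubT he))

lemma sign_lemma (k0 i n : ℕ) (h : k0 + i + 1 = n) (L : ℤ) :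
    (-1 : ℤ) ^ k0 * (-1 + L) ^ i = (-1) ^ (n - 1) * (1 - L) ^ i := by
  have h3 : n - 1 = k0 + i := by omega
  have h4 : (-1 : ℤ) * (1 - L) = -1 + L := by ring
  rw [h3, pow_add, mul_assoc, ← mul_pow, h4]

open Classical in
lemma inner_sum {G T : SimpleGraph V} (hT : IsNBCSpanningTree G T) {n : ℕ}
    (hn : Fintype.card V = n) (m : ℕ) :
    ∑ A ∈ (IAF G T).powerset,
        (-1 : ℤ) ^ (INF G T ∪ A).card * (N (m + 1) (INF G T ∪ A) : ℤ) =
      (-1) ^ (n - 1) * ((m + 1 : ℕ) : ℤ) * (1 - ((m + 1 : ℕ) : ℤ)) ^ (IAF G T).card := by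
  classical
  set k0 := (INF G T).card with hk0
  set i := (IAF G T).card with hi
  have hEG : (EG T).card + 1 = n := by rw [← hn]; exact EG_tree_card hT.1
  have hki : k0 + i + 1 = n := by
    rw [hk0, hi, INF_card_add_IAF_card]
    exact hEG
  have hterm : ∀ A ∈ (IAF G T).powerset,
      (-1 : ℤ) ^ (INF G T ∪ A).card * (N (m + 1) (INF G T ∪ A) : ℤ) =
        ((-1 : ℤ) ^ k0 * ((m + 1 : ℕ) : ℤ)) *
          ((-1 : ℤ) ^ A.card * ((m + 1 : ℕ) : ℤ) ^ (i - A.card)) := by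
    intro A hA
    rw [Finset.mem_powerset] at hA
    have hdisj : Disjoint (INF G T) A := (disjoint_INF_IAF).mono_right hA
    have hAi : A.card ≤ i := Finset.card_le_card hA
    have h1 : (INF G T ∪ A).card = k0 + A.card := Finset.card_union_of_disjoint hdisj
    have hsubT : (↑(INF G T ∪ A) : Set (Sym2 V)) ⊆ T.edgeSet := by
      intro e he
      rw [Finset.coe_union, Set.mem_union] at he
      rcases he with he | he
      · exact (mem_INF.mp he).1
      · exact (mem_IAF.mp (hA he)).1
    have hdiag : ∀ e ∈ INF G T ∪ A, ¬ e.IsDiag := by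
      intro e he
      exact T.not_isDiag_of_mem_edgeSet (hsubT he)
    have hac : (fromEdgeSet (↑(INF G T ∪ A) : Set (Sym2 V))).IsAcyclic :=
      isAcyclic_mono (fromEdgeSet_le_of_subset hsubT) hT.1.2.IsAcyclic
    have hcardle : (INF G T ∪ A).card ≤ Fintype.card V := by
      rw [h1, hn]
      omega
    have h2 := N_acyclic_eq (m := m) (INF G T ∪ A) hdiag hac hcardle
    have h3 : Fintype.card V - (INF G T ∪ A).card = (i - A.card) + 1 := by
      rw [h1, hn]
      omega
    rw [h2, h3, h1]
    push_cast
    ring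
  refine (Finset.sum_congr rfl hterm).trans ?_
  rw [← Finset.mul_sum, sum_pow_aux]
  have hsign := sign_lemma k0 i n hki ((m + 1 : ℕ) : ℤ)
  rw [← hi]
  linear_combination ((m + 1 : ℕ) : ℤ) * hsign

open Classical in
lemma part4 {G : SimpleGraph V} (hG : G.Connected) {n : ℕ} (hn : Fintype.card V = n)
    (hn2 : 2 ≤ n) (m : ℕ) (t : ℕ → ℕ)
    (ht' : ∀ j, (t j : ℤ) =
      (((Set.toFinite {T : SimpleGraph V | IsNBCSpanningTree G T}).toFinset).filter
        (fun T => (IAF G T).card = j)).card) :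
    ∑ S ∈ (EG G).powerset.filter (fun S : Finset (Sym2 V) => IsNBC G (↑S : Set (Sym2 V))),
        (-1 : ℤ) ^ S.card * (N (m + 1) S : ℤ) =
      (-1) ^ (n - 1) * ((m + 1 : ℕ) : ℤ) *
        ∑ j ∈ Finset.Icc 1 (n - 1), (t j : ℤ) * (1 - ((m + 1 : ℕ) : ℤ)) ^ j := by
  set TF := (Set.toFinite {T : SimpleGraph V | IsNBCSpanningTree G T}).toFinset with hTF
  set P := (EG G).powerset.filter (fun S : Finset (Sym2 V) => IsNBC G (↑S : Set (Sym2 V)))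
    with hP
  have hmaps : ∀ S ∈ P, tau G S ∈ TF := by
    intro S hS
    rw [hP, Finset.mem_filter, Finset.mem_powerset] at hS
    obtain ⟨h1, h2, h3, h4⟩ := tau_spec (exists_tau hG hS.1 hS.2)
    rw [hTF, Set.Finite.mem_toFinset]
    exact ⟨h1, h2⟩
  rw [← Finset.sum_fiberwise_of_maps_to hmaps
    (fun S => (-1 : ℤ) ^ S.card * (N (m + 1) S : ℤ))]
  have hinner : ∀ T ∈ TF,
      ∑ S ∈ P.filter (fun S => tau G S = T), (-1 : ℤ) ^ S.card * (N (m + 1) S : ℤ) =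
        (-1) ^ (n - 1) * ((m + 1 : ℕ) : ℤ) * (1 - ((m + 1 : ℕ) : ℤ)) ^ (IAF G T).card := by
    intro T hTmem
    have hT : IsNBCSpanningTree G T := by
      rw [hTF, Set.Finite.mem_toFinset] at hTmem
      exact hTmem
    rw [hP, fiber_eq hG hT, Finset.sum_image ?hinj]
    case hinj =>
      intro A hA B hB hAB
      rw [Finset.mem_coe, Finset.mem_powerset] at hA hB
      have dA : Disjoint (INF G T) A := (disjoint_INF_IAF).mono_right hA
      have dB : Disjoint (INF G T) B := (disjoint_INF_IAF).mono_right hB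
      dsimp only at hAB
      rw [← Finset.union_sdiff_cancel_left dA, ← Finset.union_sdiff_cancel_left dB, hAB]
    exact inner_sum hT hn m
  rw [Finset.sum_congr rfl hinner]
  have hbounds : ∀ T ∈ TF, (IAF G T).card ∈ Finset.Icc 1 (n - 1) := by
    intro T hTmem
    have hT : IsNBCSpanningTree G T := by
      rw [hTF, Set.Finite.mem_toFinset] at hTmem
      exact hTmem
    have hEG : (EG T).card + 1 = n := by rw [← hn]; exact EG_tree_card hT.1
    have hub : (IAF G T).card ≤ (EG T).card := by
      rw [← INF_card_add_IAF_card (G := G) (T := T)]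
      omega
    have hlb : 1 ≤ (IAF G T).card :=
      Finset.card_pos.mpr (min_edge_active hG (by omega) hT)
    rw [Finset.mem_Icc]
    omega
  rw [← Finset.sum_fiberwise_of_maps_to hbounds
    (fun T => (-1 : ℤ) ^ (n - 1) * ((m + 1 : ℕ) : ℤ) *
      (1 - ((m + 1 : ℕ) : ℤ)) ^ (IAF G T).card)]
  rw [Finset.mul_sum]
  refine Finset.sum_congr rfl ?_
  intro j hj
  have hconst : ∀ T ∈ TF.filter (fun T => (IAF G T).card = j),
      (-1 : ℤ) ^ (n - 1) * ((m + 1 : ℕ) : ℤ) * (1 - ((m + 1 : ℕ) : ℤ)) ^ (IAF G T).card =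
        (-1 : ℤ) ^ (n - 1) * ((m + 1 : ℕ) : ℤ) * (1 - ((m + 1 : ℕ) : ℤ)) ^ j := by
    intro T hT
    rw [Finset.mem_filter] at hT
    rw [hT.2]
  rw [Finset.sum_congr rfl hconst, Finset.sum_const, ht' j]
  rw [nsmul_eq_mul]
  ring

end Assembly

end NBC

/-- spanning tree expansion of the chromatic polynomial:
for a finite connected simple graph `G` with `n ≥ 2` vertices and an edge order,
the number of proper colorings with `lam` colors equals
`(-1)^(n-1) * lam * ∑_{i=1}^{n-1} t_i * (1-lam)^i`, where `t_i` is the number of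
NBC spanning trees of `G` with exactly `i` internally active edges. -/
theorem chromatic_polynomial_nbc_tree_expansion
    {V : Type*} [Fintype V] [LinearOrder (Sym2 V)] (G : SimpleGraph V)
    (hconn : G.Connected) (n : ℕ) (hn : Fintype.card V = n) (hn2 : 2 ≤ n)
    (t : ℕ → ℕ)
    (ht : ∀ i, t i = Set.ncard {T : SimpleGraph V |
      IsNBCSpanningTree G T ∧ Set.ncard {e | InternallyActive G T e} = i})
    (lam : ℕ) :
    (Nat.card (G.Coloring (Fin lam)) : ℤ) =
      (-1) ^ (n - 1) * (lam : ℤ) *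
        ∑ i ∈ Finset.Icc 1 (n - 1), (t i : ℤ) * (1 - (lam : ℤ)) ^ i := by
  classical
  by_cases h0 : lam = 0
  · subst h0
    haveI : Nonempty V := hconn.nonempty
    haveI : IsEmpty (G.Coloring (Fin 0)) := ⟨fun c => (c (Classical.arbitrary V)).elim0⟩
    rw [Nat.card_of_isEmpty]
    simp
  · obtain ⟨m, rfl⟩ := Nat.exists_eq_succ_of_ne_zero h0
    have ht' : ∀ j, ((t j : ℤ)) =
        (((Set.toFinite {T : SimpleGraph V | IsNBCSpanningTree G T}).toFinset).filter
          (fun T => (NBC.IAF G T).card = j)).card := by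
      intro j
      rw [ht j]
      have hset : {T : SimpleGraph V | IsNBCSpanningTree G T ∧
          Set.ncard {e | InternallyActive G T e} = j} =
          ↑(((Set.toFinite {T : SimpleGraph V | IsNBCSpanningTree G T}).toFinset).filter
            (fun T => (NBC.IAF G T).card = j)) := by
        ext T
        have hIA : {e | InternallyActive G T e} = ↑(NBC.IAF G T) :=
          (Set.Finite.coe_toFinset _).symm
        simp only [Set.mem_setOf_eq, Finset.coe_filter, Set.Finite.mem_toFinset, hIA,
          Set.ncard_coe_finset]
      rw [hset, Set.ncard_coe_finset]
    rw [NBC.part1 G (m + 1), NBC.part2 G (m + 1)]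
    exact NBC.part4 hconn hn hn2 m t ht'
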